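/- Let Σ be symmetric positive definite, P a p×2 matrix with orthonormal columns, and c > 0. The supremum over boundary points x of the p-dimensional ellipsoid {x : (x−μ)Σ⁻¹(x−μ)^T = c²} of the projected quadratic form (xP − μP)(P^TΣP)⁻¹(xP − μP)^T equals c², and it is attained. -/

import Mathlib

/-!
Write `q_S(y) = y S⁻¹ yᵀ` and `A = Pᵀ S P`, which is positive definite because `P` is injective.
For `y` in ℝᵖ put `w = (yP) A⁻¹` and `y' = w Pᵀ S`. Then `y'` is the `q_S`-orthogonal projection
of `y` onto the row space of `Pᵀ S`, and `q_A(yP) = q_S(y') = q_S(y) - q_S(y - y') ≤ q_S(y)`, with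
equality on that row space. Translating by `μ` and scaling a nonzero `z` so that
`q_S(z Pᵀ S) = z A zᵀ = c²` gives a boundary point where the bound is attained.
-/

open Matrix

noncomputable def invQuadForm {ι : Type*} [Fintype ι] [DecidableEq ι] (S : Matrix ι ι ℝ)
    (y : ι → ℝ) : ℝ :=
  vecMul y S⁻¹ ⬝ᵥ y

section
variable {ι κ : Type*} [Fintype ι] [Fintype κ]

theorem mulVec_injective_of_mul_eq_one {R : Type*} [Semiring R] [DecidableEq κ]
    {B : Matrix κ ι R} {P : Matrix ι κ R} (h : B * P = 1) :
    Function.Injective P.mulVec := fun x y hxy => by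
  simpa [mulVec_mulVec, h] using congrArg (B *ᵥ ·) hxy

theorem vecMul_vecMul_transpose_mul_inv_dotProduct [DecidableEq ι] {S : Matrix ι ι ℝ}
    (hS : IsUnit S.det) (P : Matrix ι κ ℝ) (w : κ → ℝ) (b : ι → ℝ) :
    vecMul (vecMul w (Pᵀ * S)) S⁻¹ ⬝ᵥ b = w ⬝ᵥ vecMul b P := by
  rw [vecMul_vecMul, Matrix.mul_assoc, mul_nonsing_inv S hS, Matrix.mul_one,
    ← mulVec_transpose, transpose_transpose, dotProduct_comm, dotProduct_mulVec, dotProduct_comm]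

theorem invQuadForm_vecMul_transpose_mul [DecidableEq ι] {S : Matrix ι ι ℝ} (hS : IsUnit S.det)
    (P : Matrix ι κ ℝ) (z : κ → ℝ) :
    invQuadForm S (vecMul z (Pᵀ * S)) = z ⬝ᵥ vecMul z (Pᵀ * S * P) := by
  rw [invQuadForm, vecMul_vecMul_transpose_mul_inv_dotProduct hS, vecMul_vecMul]

theorem invQuadForm_vecMul_vecMul_transpose_mul [DecidableEq κ] {S : Matrix ι ι ℝ}
    (P : Matrix ι κ ℝ) (hA : IsUnit (Pᵀ * S * P).det) (z : κ → ℝ) :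
    invQuadForm (Pᵀ * S * P) (vecMul (vecMul z (Pᵀ * S)) P) = z ⬝ᵥ vecMul z (Pᵀ * S * P) := by
  have hv : vecMul (vecMul z (Pᵀ * S)) P = vecMul z (Pᵀ * S * P) := vecMul_vecMul _ _ _
  rw [invQuadForm, hv, vecMul_vecMul, mul_nonsing_inv _ hA, vecMul_one, dotProduct_comm]

theorem invQuadForm_vecMul_le [DecidableEq ι] [DecidableEq κ] {S : Matrix ι ι ℝ}
    (hS : S.PosDef) (P : Matrix ι κ ℝ) (hA : IsUnit (Pᵀ * S * P).det) (y : ι → ℝ) :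
    invQuadForm (Pᵀ * S * P) (vecMul y P) ≤ invQuadForm S y := by
  set w := vecMul (vecMul y P) (Pᵀ * S * P)⁻¹
  set y' := vecMul w (Pᵀ * S)
  have hS' : IsUnit S.det := hS.det_pos.ne'.isUnit
  have hSinv : (S⁻¹)ᵀ = S⁻¹ := by
    rw [transpose_nonsing_inv, ← conjTranspose_eq_transpose_of_trivial, hS.isHermitian.eq]
  have hy'y : vecMul y' S⁻¹ ⬝ᵥ y = w ⬝ᵥ vecMul y P :=
    vecMul_vecMul_transpose_mul_inv_dotProduct hS' P w y
  have hyy' : vecMul y S⁻¹ ⬝ᵥ y' = w ⬝ᵥ vecMul y P := by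
    rw [← hy'y, ← dotProduct_mulVec, ← vecMul_transpose, hSinv, dotProduct_comm]
  have hy'y' : vecMul y' S⁻¹ ⬝ᵥ y' = w ⬝ᵥ vecMul y P := by
    rw [vecMul_vecMul_transpose_mul_inv_dotProduct hS', vecMul_vecMul, vecMul_vecMul,
      nonsing_inv_mul _ hA, vecMul_one]
  have hnonneg : 0 ≤ vecMul (y - y') S⁻¹ ⬝ᵥ (y - y') := by
    simpa [dotProduct_mulVec] using hS.inv.posSemidef.dotProduct_mulVec_nonneg (y - y')
  rw [sub_vecMul, sub_dotProduct, dotProduct_sub, dotProduct_sub, hy'y, hyy', hy'y'] at hnonneg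
  show w ⬝ᵥ vecMul y P ≤ vecMul y S⁻¹ ⬝ᵥ y
  linarith

theorem Matrix.PosDef.exists_dotProduct_vecMul_eq [Nonempty κ] {A : Matrix κ κ ℝ}
    (hA : A.PosDef) {a : ℝ} (ha : 0 ≤ a) : ∃ z : κ → ℝ, z ⬝ᵥ vecMul z A = a := by
  obtain ⟨z₀, hz₀⟩ : ∃ z₀ : κ → ℝ, z₀ ≠ 0 := exists_ne 0
  have hpos : 0 < z₀ ⬝ᵥ vecMul z₀ A := by
    simpa [dotProduct_mulVec, dotProduct_comm] using hA.dotProduct_mulVec_pos hz₀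
  refine ⟨Real.sqrt (a / (z₀ ⬝ᵥ vecMul z₀ A)) • z₀, ?_⟩
  rw [smul_vecMul, smul_dotProduct, dotProduct_smul, smul_eq_mul, smul_eq_mul, ← mul_assoc,
    Real.mul_self_sqrt (div_nonneg ha hpos.le), div_mul_cancel₀ _ hpos.ne']

end

theorem sup_projected_form_on_boundary_general {p : ℕ}
    (S : Matrix (Fin p) (Fin p) ℝ) (hS : S.PosDef)
    (μ : Fin p → ℝ) (c : ℝ)
    (P : Matrix (Fin p) (Fin 2) ℝ) (hP : Pᵀ * P = 1) :
    IsGreatest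
      {r : ℝ | ∃ x : Fin p → ℝ,
        Matrix.vecMul (x - μ) S⁻¹ ⬝ᵥ (x - μ) = c ^ 2 ∧
        r = Matrix.vecMul (Matrix.vecMul x P - Matrix.vecMul μ P) (Pᵀ * S * P)⁻¹ ⬝ᵥ
          (Matrix.vecMul x P - Matrix.vecMul μ P)}
      (c ^ 2) := by
  have hA : (Pᵀ * S * P).PosDef := by
    simpa using hS.conjTranspose_mul_mul_same (mulVec_injective_of_mul_eq_one hP)
  have hA' : IsUnit (Pᵀ * S * P).det := hA.det_pos.ne'.isUnit
  constructor
  · obtain ⟨z, hz⟩ := hA.exists_dotProduct_vecMul_eq (sq_nonneg c)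
    refine ⟨vecMul z (Pᵀ * S) + μ, ?_, ?_⟩
    · rw [add_sub_cancel_right, ← hz]
      exact invQuadForm_vecMul_transpose_mul hS.det_pos.ne'.isUnit P z
    · rw [← sub_vecMul, add_sub_cancel_right, ← hz]
      exact (invQuadForm_vecMul_vecMul_transpose_mul P hA' z).symm
  · rintro r ⟨x, hx, rfl⟩
    rw [← sub_vecMul, ← hx]
    exact invQuadForm_vecMul_le hS P hA' (x - μ)

theorem sup_projected_form_on_boundary {p : ℕ}
    (S : Matrix (Fin p) (Fin p) ℝ) (hS : S.PosDef)
    (μ : Fin p → ℝ) (c : ℝ) (hc : 0 < c)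
    (P : Matrix (Fin p) (Fin 2) ℝ) (hP : Pᵀ * P = 1) :
    IsGreatest
      {r : ℝ | ∃ x : Fin p → ℝ,
        Matrix.vecMul (x - μ) S⁻¹ ⬝ᵥ (x - μ) = c ^ 2 ∧
        r = Matrix.vecMul (Matrix.vecMul x P - Matrix.vecMul μ P) (Pᵀ * S * P)⁻¹ ⬝ᵥ
          (Matrix.vecMul x P - Matrix.vecMul μ P)}
      (c ^ 2) :=
  sup_projected_form_on_boundary_general S hS μ c P hP
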